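/- arXiv:2312.15546 — 3 statements merged into one kernel-verified Lean document; each statement's English description precedes it below -/
import Mathlib

section
/- The numerical radius of the N×N nilpotent Jordan block J₀ equals cos(π/(N+1)); in particular r(J₀) < 1 for every N, and r(J₀) → 1 as N → ∞. -/
/-!
For `x ∈ ℂ^N` one has `|⟨J₀x, x⟩| ≤ ∑ |x_k| |x_{k+1}|`, so `r(J₀)` is the maximum on the unit
sphere of the quadratic form `∑ b_k b_{k+1}` of the path graph on `N` vertices. The sine vector
`s_k = sin (kπ/(N+1))` vanishes at `k = 0` and `k = N + 1`, is positive in between and satisfies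
`s_{k-1} + s_{k+1} = 2 cos (π/(N+1)) s_k`. Substituting `b_k = s_k t_k` then gives
`cos (π/(N+1)) ∑ b_k² - ∑ b_k b_{k+1} = ½ ∑ s_k s_{k+1} (t_k - t_{k+1})²`, which is nonnegative and
vanishes for `b = s`.
-/

noncomputable def opNorm {N : ℕ} (A : Matrix (Fin N) (Fin N) ℂ) : ℝ :=
  ‖Matrix.toEuclideanCLM (𝕜 := ℂ) A‖

noncomputable def numRad {N : ℕ} (A : Matrix (Fin N) (Fin N) ℂ) : ℝ :=
  sSup {r : ℝ | ∃ x : EuclideanSpace ℂ (Fin N), ‖x‖ = 1 ∧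
    r = ‖inner (𝕜 := ℂ) x (Matrix.toEuclideanCLM (𝕜 := ℂ) A x)‖}

noncomputable def numRange {N : ℕ} (A : Matrix (Fin N) (Fin N) ℂ) : Set ℂ :=
  {z : ℂ | ∃ x : EuclideanSpace ℂ (Fin N), ‖x‖ = 1 ∧
    z = inner (𝕜 := ℂ) x (Matrix.toEuclideanCLM (𝕜 := ℂ) A x)}


def J0 (N : ℕ) : Matrix (Fin N) (Fin N) ℂ :=
  Matrix.of fun i j => if (j : ℕ) = (i : ℕ) + 1 then 1 else 0

open Finset Real Matrix

section PathGraph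

variable {n : ℕ} {c : ℝ} {s : ℕ → ℝ}

theorem mul_sum_sq_sub_sum_mul_succ_eq (hs0 : s 0 = 0) (hsn : s (n + 2) = 0)
    (hne : ∀ i : Fin (n + 1), s (i + 1) ≠ 0)
    (hrec : ∀ i : Fin (n + 1), s i + s (i + 2) = 2 * c * s (i + 1)) (b : Fin (n + 1) → ℝ) :
    c * ∑ i, b i ^ 2 - ∑ i : Fin n, b i.castSucc * b i.succ =
      ∑ i : Fin n, s (i + 1) * s (i + 2) / 2 *
        (b i.castSucc / s (i + 1) - b i.succ / s (i + 2)) ^ 2 := by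
  set f : Fin (n + 1) → ℝ := fun i => s (i + 2) / s (i + 1) * b i ^ 2
  set g : Fin (n + 1) → ℝ := fun i => s i / s (i + 1) * b i ^ 2
  have hfg : ∀ i, c * b i ^ 2 = (f i + g i) / 2 := fun i => by
    simp only [f, g]
    field_simp [hne i]
    linear_combination (-b i ^ 2) * hrec i
  have hf : ∑ i, f i = ∑ i : Fin n, f i.castSucc := by
    simp [Fin.sum_univ_castSucc, f, hsn]
  have hg : ∑ i, g i = ∑ i : Fin n, g i.succ := by
    simp [Fin.sum_univ_succ, g, hs0]
  have hterm : ∀ i : Fin n, (f i.castSucc + g i.succ) / 2 - b i.castSucc * b i.succ =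
      s (i + 1) * s (i + 2) / 2 * (b i.castSucc / s (i + 1) - b i.succ / s (i + 2)) ^ 2 :=
    fun i => by
      have h1 := hne i.castSucc
      have h2 := hne i.succ
      simp only [Fin.val_castSucc, Fin.val_succ] at h1 h2
      simp only [f, g, Fin.val_castSucc, Fin.val_succ]
      field_simp
      ring
  rw [mul_sum, sum_congr rfl fun i _ => hfg i, ← sum_div, sum_add_distrib, hf, hg,
    ← sum_add_distrib, sum_div, ← sum_sub_distrib]
  exact sum_congr rfl fun i _ => hterm i

theorem sum_mul_succ_le_mul_sum_sq (hs0 : s 0 = 0) (hsn : s (n + 2) = 0)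
    (hpos : ∀ i : Fin (n + 1), 0 < s (i + 1))
    (hrec : ∀ i : Fin (n + 1), s i + s (i + 2) = 2 * c * s (i + 1)) (b : Fin (n + 1) → ℝ) :
    ∑ i : Fin n, b i.castSucc * b i.succ ≤ c * ∑ i, b i ^ 2 := by
  have h := mul_sum_sq_sub_sum_mul_succ_eq hs0 hsn (fun i => (hpos i).ne') hrec b
  have : 0 ≤ ∑ i : Fin n, s (i + 1) * s (i + 2) / 2 *
      (b i.castSucc / s (i + 1) - b i.succ / s (i + 2)) ^ 2 := by
    refine sum_nonneg fun i _ => mul_nonneg (div_nonneg (mul_nonneg ?_ ?_) zero_le_two) (sq_nonneg _)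
    · simpa using (hpos i.castSucc).le
    · simpa using (hpos i.succ).le
  linarith

theorem sum_mul_succ_eq_mul_sum_sq (hs0 : s 0 = 0) (hsn : s (n + 2) = 0)
    (hne : ∀ i : Fin (n + 1), s (i + 1) ≠ 0)
    (hrec : ∀ i : Fin (n + 1), s i + s (i + 2) = 2 * c * s (i + 1)) :
    ∑ i : Fin n, s (i + 1) * s (i + 2) = c * ∑ i : Fin (n + 1), s (i + 1) ^ 2 := by
  have h := mul_sum_sq_sub_sum_mul_succ_eq hs0 hsn hne hrec fun i => s (i + 1)
  simp only [Fin.val_castSucc, Fin.val_succ, add_assoc, one_add_one_eq_two] at h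
  have hzero : ∀ i : Fin n, s (i + 1) / s (i + 1) - s (i + 2) / s (i + 2) = 0 := fun i => by
    have h1 := hne i.castSucc
    have h2 := hne i.succ
    simp only [Fin.val_castSucc, Fin.val_succ, add_assoc, one_add_one_eq_two] at h1 h2
    rw [div_self h1, div_self h2, sub_self]
  simp only [hzero, ne_eq, OfNat.ofNat_ne_zero, not_false_eq_true, zero_pow, mul_zero,
    sum_const_zero] at h
  linarith

end PathGraph

theorem numRad_eq_of_forall_le_of_eq {N : ℕ} (A : Matrix (Fin N) (Fin N) ℂ) (c : ℝ)
    (hle : ∀ x, ‖inner ℂ x (toEuclideanCLM (𝕜 := ℂ) A x)‖ ≤ c * ‖x‖ ^ 2)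
    (v : EuclideanSpace ℂ (Fin N)) (hv : v ≠ 0)
    (heq : ‖inner ℂ v (toEuclideanCLM (𝕜 := ℂ) A v)‖ = c * ‖v‖ ^ 2) :
    numRad A = c := by
  refine IsGreatest.csSup_eq ⟨⟨(‖v‖⁻¹ : ℂ) • v, norm_smul_inv_norm hv, ?_⟩, ?_⟩
  · have hv' : ‖v‖ ≠ 0 := norm_ne_zero_iff.mpr hv
    rw [map_smul, inner_smul_left, inner_smul_right, norm_mul, norm_mul, heq]
    simp only [Complex.norm_conj, norm_inv, Complex.norm_real, norm_norm]
    field_simp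
  · rintro r ⟨x, hx, rfl⟩
    simpa [hx] using hle x

theorem numRad_fin_zero (A : Matrix (Fin 0) (Fin 0) ℂ) : numRad A = 0 := by
  rw [numRad, ← Real.sSup_empty]
  congr
  refine Set.eq_empty_of_forall_notMem ?_
  rintro r ⟨x, hx, -⟩
  simp [Subsingleton.elim x 0] at hx

theorem J0_mulVec_castSucc {n : ℕ} (x : Fin (n + 1) → ℂ) (i : Fin n) :
    (J0 (n + 1) *ᵥ x) i.castSucc = x i.succ := by
  rw [mulVec, dotProduct, sum_eq_single i.succ]
  · simp [J0]
  · intro j _ hj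
    simp only [J0, of_apply, Fin.val_castSucc, ite_mul, one_mul, zero_mul]
    exact if_neg fun h => hj (Fin.ext h)
  · simp

theorem J0_mulVec_last {n : ℕ} (x : Fin (n + 1) → ℂ) : (J0 (n + 1) *ᵥ x) (Fin.last n) = 0 := by
  rw [mulVec, dotProduct]
  refine sum_eq_zero fun j _ => ?_
  simp only [J0, of_apply, Fin.val_last, ite_mul, one_mul, zero_mul]
  exact if_neg fun h => by omega

theorem inner_toEuclideanCLM_J0 {n : ℕ} (x : EuclideanSpace ℂ (Fin (n + 1))) :
    inner ℂ x (toEuclideanCLM (𝕜 := ℂ) (J0 (n + 1)) x) =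
      ∑ i : Fin n, starRingEnd ℂ (x i.castSucc) * x i.succ := by
  rw [PiLp.inner_apply, Fin.sum_univ_castSucc]
  simp [J0_mulVec_castSucc, J0_mulVec_last, mul_comm]

theorem numRad_J0_eq_of_pos_eigenvector {n : ℕ} {c : ℝ} {s : ℕ → ℝ} (hs0 : s 0 = 0)
    (hsn : s (n + 2) = 0) (hpos : ∀ i : Fin (n + 1), 0 < s (i + 1))
    (hrec : ∀ i : Fin (n + 1), s i + s (i + 2) = 2 * c * s (i + 1)) :
    numRad (J0 (n + 1)) = c := by
  let v : EuclideanSpace ℂ (Fin (n + 1)) := WithLp.toLp 2 fun i => (s (i + 1) : ℂ)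
  have hv : v ≠ 0 := fun h => (hpos 0).ne' <| by
    simpa [v] using congr_arg (fun w : EuclideanSpace ℂ (Fin (n + 1)) => w 0) h
  refine numRad_eq_of_forall_le_of_eq _ c (fun x => ?_) v hv ?_
  · calc ‖inner ℂ x (toEuclideanCLM (𝕜 := ℂ) (J0 (n + 1)) x)‖
        ≤ ∑ i : Fin n, ‖x i.castSucc‖ * ‖x i.succ‖ := by
          rw [inner_toEuclideanCLM_J0]
          refine (norm_sum_le _ _).trans_eq (sum_congr rfl fun i _ => ?_)
          rw [norm_mul, Complex.norm_conj]
      _ ≤ c * ∑ i, ‖x i‖ ^ 2 :=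
          sum_mul_succ_le_mul_sum_sq hs0 hsn hpos hrec fun i => ‖x i‖
      _ = c * ‖x‖ ^ 2 := by rw [EuclideanSpace.norm_sq_eq]
  · have hsum := sum_mul_succ_eq_mul_sum_sq hs0 hsn (fun i => (hpos i).ne') hrec
    have hnonneg : 0 ≤ ∑ i : Fin n, s (i + 1) * s (i + 2) := sum_nonneg fun i _ => by
      simpa using mul_nonneg (hpos i.castSucc).le (hpos i.succ).le
    rw [inner_toEuclideanCLM_J0, EuclideanSpace.norm_sq_eq]
    simp only [v, Complex.conj_ofReal, Complex.norm_real, Real.norm_eq_abs, sq_abs,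
      Fin.val_castSucc, Fin.val_succ, add_assoc, one_add_one_eq_two]
    rw [← hsum, ← abs_of_nonneg hnonneg]
    simp only [← Complex.ofReal_mul, ← Complex.ofReal_sum, Complex.norm_real, Real.norm_eq_abs]

theorem sin_add_sin_nat_mul_add_two (θ : ℝ) (k : ℕ) :
    sin (k * θ) + sin ((k + 2 : ℕ) * θ) = 2 * cos θ * sin ((k + 1 : ℕ) * θ) := by
  have hk : ((k : ℕ) : ℝ) * θ = (k + 1 : ℕ) * θ - θ := by push_cast; ring
  have hk2 : ((k + 2 : ℕ) : ℝ) * θ = (k + 1 : ℕ) * θ + θ := by push_cast; ring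
  rw [hk, hk2, sin_sub, sin_add]
  ring

theorem numRad_J0 {N : ℕ} (hN : 0 < N) : numRad (J0 N) = cos (π / (N + 1)) := by
  obtain ⟨n, rfl⟩ : ∃ n, N = n + 1 := ⟨N - 1, by omega⟩
  set θ := π / ((n + 1 : ℕ) + 1)
  have hπ : ((n + 2 : ℕ) : ℝ) * θ = π := by
    simp only [θ]
    field_simp
    push_cast
    ring
  refine numRad_J0_eq_of_pos_eigenvector (s := fun k => sin (k * θ)) (by simp)
    (by simp only [hπ, sin_pi]) (fun i => sin_pos_of_pos_of_lt_pi (by positivity) ?_)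
    fun i => sin_add_sin_nat_mul_add_two θ i
  rw [← hπ]
  gcongr
  omega

theorem cos_pi_div_nat_add_one_lt_one (N : ℕ) : cos (π / (N + 1)) < 1 := by
  have h : π / (N + 1) ≤ π := div_le_self pi_pos.le (by linarith [N.cast_nonneg (α := ℝ)])
  simpa using cos_lt_cos_of_nonneg_of_le_pi le_rfl h (by positivity)

theorem tendsto_cos_pi_div_nat_add_one :
    Filter.Tendsto (fun N : ℕ => cos (π / (N + 1))) Filter.atTop (nhds 1) := by
  have h : Filter.Tendsto (fun N : ℕ => π / (N + 1)) Filter.atTop (nhds 0) := by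
    simpa [div_eq_mul_inv] using
      (tendsto_one_div_add_atTop_nhds_zero_nat (𝕜 := ℝ)).const_mul π
  simpa [Function.comp_def] using (continuous_cos.tendsto 0).comp h

theorem stmt_4 :
    (∀ N : ℕ, 0 < N → numRad (J0 N) = Real.cos (Real.pi / (N + 1))) ∧
    (∀ N : ℕ, numRad (J0 N) < 1) ∧
    Filter.Tendsto (fun N : ℕ => numRad (J0 N)) Filter.atTop (nhds 1) := by
  refine ⟨fun N => numRad_J0, fun N => ?_, ?_⟩
  · rcases N.eq_zero_or_pos with rfl | hN
    · rw [numRad_fin_zero]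
      exact one_pos
    · exact numRad_J0 hN ▸ cos_pi_div_nat_add_one_lt_one N
  · refine tendsto_cos_pi_div_nat_add_one.congr' ?_
    filter_upwards [Filter.eventually_gt_atTop 0] with N hN
    exact (numRad_J0 hN).symm
end

section
/- SSP decomposition stability for RK2: if A ∈ M_N(ℂ) satisfies r(I + A) ≤ 1, then P₂(A) := I + A + A²/2 satisfies r(P₂(A)) ≤ 1, using the identity P₂(A) = (1/2)I + (1/2)(I + A)². -/
/-! Since `I + A + A²/2 = ½ I + ½ (I + A)²`, subadditivity and homogeneity of the numerical
radius reduce the claim to Halmos' inequality `r(B²) ≤ 1` for `B = I + A` with `r(B) ≤ 1`.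
For that, evaluate the quadratic form of `B` at `x ± c • B x`, where `c` is unimodular with
`c² ⟪x, B² x⟫ = |⟪x, B² x⟫|`: the difference of the two values is
`2 c⁻¹ (|⟪x, B² x⟫| + ‖B x‖²)`, while `r(B) ≤ 1` and the parallelogram law bound it by
`2 (‖x‖² + ‖B x‖²)`. -/

open Complex Matrix
open scoped InnerProductSpace ComplexConjugate

section Halmos

variable {E : Type*} [NormedAddCommGroup E] [InnerProductSpace ℂ E]

lemma inner_add_smul_sub_inner_sub_smul (T : E →ₗ[ℂ] E) (x : E) (c : ℂ) :
    ⟪x + c • T x, T (x + c • T x)⟫_ℂ - ⟪x - c • T x, T (x - c • T x)⟫_ℂ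
      = 2 * (c * ⟪x, T (T x)⟫_ℂ + conj c * ⟪T x, T x⟫_ℂ) := by
  simp only [map_add, map_sub, map_smul, inner_add_left, inner_add_right,
    inner_sub_left, inner_sub_right, inner_smul_left, inner_smul_right]
  ring

lemma norm_inner_apply_apply_le_of_forall_norm_inner_le (T : E →ₗ[ℂ] E)
    (hT : ∀ y, ‖⟪y, T y⟫_ℂ‖ ≤ ‖y‖ ^ 2) (x : E) : ‖⟪x, T (T x)⟫_ℂ‖ ≤ ‖x‖ ^ 2 := by
  set w := ⟪x, T (T x)⟫_ℂ
  set c := exp (↑(-(arg w / 2)) * I)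
  have hc : ‖c‖ = 1 := norm_exp_ofReal_mul_I _
  have hcw : c * (c * w) = ‖w‖ := by
    have hc2 : c * c * exp (arg w * I) = 1 := by
      rw [← exp_add, ← exp_add, ← exp_zero]; push_cast; ring_nf
    linear_combination (c * c) * (norm_mul_exp_arg_mul_I w).symm + (‖w‖ : ℂ) * hc2
  have hcc : c * conj c = 1 := by
    rw [mul_conj, normSq_eq_norm_sq, hc]; norm_num
  have key : c * (⟪x + c • T x, T (x + c • T x)⟫_ℂ - ⟪x - c • T x, T (x - c • T x)⟫_ℂ)
      = 2 * ((‖w‖ + ‖T x‖ ^ 2 : ℝ) : ℂ) := by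
    rw [inner_add_smul_sub_inner_sub_smul, inner_self_eq_norm_sq_to_K]
    push_cast
    linear_combination 2 * hcw + (2 * (‖T x‖ : ℂ) ^ 2) * hcc
  have hsum := parallelogram_law_with_norm ℂ x (c • T x)
  rw [norm_smul, hc, one_mul] at hsum
  have hdiff : 2 * (‖w‖ + ‖T x‖ ^ 2) ≤ 2 * (‖x‖ ^ 2 + ‖T x‖ ^ 2) :=
    calc 2 * (‖w‖ + ‖T x‖ ^ 2)
        = ‖⟪x + c • T x, T (x + c • T x)⟫_ℂ - ⟪x - c • T x, T (x - c • T x)⟫_ℂ‖ := by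
          rw [← one_mul ‖_ - _‖, ← hc, ← norm_mul, key, norm_mul, norm_real,
            Real.norm_of_nonneg (by positivity), Complex.norm_two]
      _ ≤ ‖x + c • T x‖ ^ 2 + ‖x - c • T x‖ ^ 2 :=
          (norm_sub_le _ _).trans (add_le_add (hT _) (hT _))
      _ = 2 * (‖x‖ ^ 2 + ‖T x‖ ^ 2) := hsum
  linarith

end Halmos

lemma one_add_add_half_smul_sq {R : Type*} [Ring R] [Module ℂ R] (a : R) :
    1 + a + (1 / 2 : ℂ) • a ^ 2 = (1 / 2 : ℂ) • 1 + (1 / 2 : ℂ) • (1 + a) ^ 2 := by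
  rw [sq, sq, add_mul, mul_add, mul_add, one_mul, one_mul, mul_one]
  module

section NumRad

variable {N : ℕ}

lemma norm_inner_le_numRad (A : Matrix (Fin N) (Fin N) ℂ) {x : EuclideanSpace ℂ (Fin N)}
    (hx : ‖x‖ = 1) : ‖⟪x, toEuclideanCLM (𝕜 := ℂ) A x⟫_ℂ‖ ≤ numRad A := by
  refine le_csSup ⟨‖toEuclideanCLM (𝕜 := ℂ) A‖, ?_⟩ ⟨x, hx, rfl⟩
  rintro _ ⟨y, hy, rfl⟩
  calc ‖⟪y, toEuclideanCLM (𝕜 := ℂ) A y⟫_ℂ‖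
      ≤ ‖y‖ * ‖toEuclideanCLM (𝕜 := ℂ) A y‖ := norm_inner_le_norm _ _
    _ ≤ ‖y‖ * (‖toEuclideanCLM (𝕜 := ℂ) A‖ * ‖y‖) := by
        gcongr; exact ContinuousLinearMap.le_opNorm _ _
    _ = ‖toEuclideanCLM (𝕜 := ℂ) A‖ := by rw [hy, one_mul, mul_one]

lemma numRad_nonneg (A : Matrix (Fin N) (Fin N) ℂ) : 0 ≤ numRad A :=
  Real.sSup_nonneg <| by rintro _ ⟨x, -, rfl⟩; exact norm_nonneg _

lemma numRad_le {A : Matrix (Fin N) (Fin N) ℂ} {c : ℝ} (hc : 0 ≤ c)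
    (h : ∀ x : EuclideanSpace ℂ (Fin N), ‖x‖ = 1 → ‖⟪x, toEuclideanCLM (𝕜 := ℂ) A x⟫_ℂ‖ ≤ c) :
    numRad A ≤ c :=
  Real.sSup_le (by rintro _ ⟨x, hx, rfl⟩; exact h x hx) hc

lemma norm_inner_le_numRad_mul_sq (A : Matrix (Fin N) (Fin N) ℂ)
    (y : EuclideanSpace ℂ (Fin N)) : ‖⟪y, toEuclideanCLM (𝕜 := ℂ) A y⟫_ℂ‖ ≤ numRad A * ‖y‖ ^ 2 := by
  rcases eq_or_ne y 0 with rfl | hy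
  · simp
  have hy' : (‖y‖ : ℂ) ≠ 0 := by simpa using hy
  set x : EuclideanSpace ℂ (Fin N) := (‖y‖ : ℂ)⁻¹ • y
  have hx : ‖x‖ = 1 := by simp [x, norm_smul, hy]
  have hyx : y = (‖y‖ : ℂ) • x := by simp [x, smul_smul, hy']
  have := norm_inner_le_numRad A hx
  rw [hyx, map_smul, inner_smul_left, inner_smul_right, norm_mul, norm_mul, norm_conj,
    norm_real, norm_norm, norm_smul, hx, norm_real, norm_norm]
  nlinarith [norm_nonneg y]

lemma numRad_add_le (A B : Matrix (Fin N) (Fin N) ℂ) : numRad (A + B) ≤ numRad A + numRad B :=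
  numRad_le (add_nonneg (numRad_nonneg A) (numRad_nonneg B)) fun x hx => by
    rw [map_add, _root_.add_apply, inner_add_right]
    exact (norm_add_le _ _).trans
      (add_le_add (norm_inner_le_numRad A hx) (norm_inner_le_numRad B hx))

lemma numRad_smul_le (c : ℂ) (A : Matrix (Fin N) (Fin N) ℂ) : numRad (c • A) ≤ ‖c‖ * numRad A :=
  numRad_le (by positivity [numRad_nonneg A]) fun x hx => by
    rw [map_smul, _root_.smul_apply, inner_smul_right, norm_mul]
    exact mul_le_mul_of_nonneg_left (norm_inner_le_numRad A hx) (norm_nonneg c)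

lemma numRad_one_le : numRad (1 : Matrix (Fin N) (Fin N) ℂ) ≤ 1 :=
  numRad_le zero_le_one fun x hx => by
    rw [map_one, one_apply_eq_self, inner_self_eq_norm_sq_to_K, hx]
    simp

lemma numRad_sq_le_one {B : Matrix (Fin N) (Fin N) ℂ} (h : numRad B ≤ 1) : numRad (B ^ 2) ≤ 1 :=
  numRad_le zero_le_one fun x hx => by
    have hB (y : EuclideanSpace ℂ (Fin N)) : ‖⟪y, toEuclideanCLM (𝕜 := ℂ) B y⟫_ℂ‖ ≤ ‖y‖ ^ 2 :=
      (norm_inner_le_numRad_mul_sq B y).trans (mul_le_of_le_one_left (by positivity) h)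
    simpa [sq, hx] using
      norm_inner_apply_apply_le_of_forall_norm_inner_le (toEuclideanCLM (𝕜 := ℂ) B).toLinearMap hB x

end NumRad

theorem stmt_12 {N : ℕ} (A : Matrix (Fin N) (Fin N) ℂ) (h : numRad (1 + A) ≤ 1) :
    numRad (1 + A + (1 / 2 : ℂ) • A ^ 2) ≤ 1 := by
  rw [one_add_add_half_smul_sq]
  calc numRad ((1 / 2 : ℂ) • 1 + (1 / 2 : ℂ) • (1 + A) ^ 2)
      ≤ ‖(1 / 2 : ℂ)‖ * numRad 1 + ‖(1 / 2 : ℂ)‖ * numRad ((1 + A) ^ 2) :=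
        (numRad_add_le _ _).trans (add_le_add (numRad_smul_le _ _) (numRad_smul_le _ _))
    _ ≤ ‖(1 / 2 : ℂ)‖ * 1 + ‖(1 / 2 : ℂ)‖ * 1 := by
        gcongr
        exacts [numRad_one_le, numRad_sq_le_one h]
    _ = 1 := by norm_num
end

section
/- SSP decomposition stability for RK4: if A ∈ M_N(ℂ) satisfies r(I + A) ≤ 1, then P₄(A) := I + A + A²/2 + A³/6 + A⁴/24 satisfies r(P₄(A)) ≤ 1, via the identity P₄(A) = (3/8)I + (1/3)(I+A) + (1/4)(I+A)² + (1/24)(I+A)⁴. -/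
/-!
If `w(T) ≤ 1` then `T + T†` is self-adjoint with `‖T + T†‖ ≤ 2`, and polarization gives
`4 Re ⟪x, T² x⟫ = 4 Re ⟪T† x, T x⟫ ≤ ‖(T + T†) x‖² ≤ 4 ‖x‖²`; rotating `T` by a unimodular scalar
turns this into `w(T²) ≤ 1` (Halmos' power inequality for squares), hence `w(T⁴) ≤ 1`.
Writing `P₄(A) = 3/8 + (1/3)(1 + A) + (1/4)(1 + A)² + (1/24)(1 + A)⁴`, the weights sum to `1`
and `w` is subadditive and absolutely homogeneous, so `w(P₄(A)) ≤ 1`.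
-/

open ContinuousLinearMap
open scoped ComplexInnerProductSpace

section NumericalRadius

variable {H : Type*} [NormedAddCommGroup H] [InnerProductSpace ℂ H]

/-- `w(T) ≤ c` for the numerical radius `w`, in homogeneous form. -/
def NumRadLE (T : H →L[ℂ] H) (c : ℝ) : Prop :=
  ∀ x, ‖⟪x, T x⟫‖ ≤ c * ‖x‖ ^ 2

namespace NumRadLE

variable {S T : H →L[ℂ] H} {a b c : ℝ}

theorem of_norm_eq_one (h : ∀ x, ‖x‖ = 1 → ‖⟪x, T x⟫‖ ≤ c) : NumRadLE T c := by
  intro x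
  rcases eq_or_ne x 0 with rfl | hx
  · simp
  set u : H := (‖x‖⁻¹ : ℂ) • x
  have hu : ‖u‖ = 1 := norm_smul_inv_norm hx
  have hxu : x = (‖x‖ : ℂ) • u := by
    simp [u, smul_smul, norm_ne_zero_iff.mpr hx]
  calc ‖⟪x, T x⟫‖ = ‖⟪u, T u⟫‖ * ‖x‖ ^ 2 := by
        rw [hxu, map_smul, inner_smul_left, inner_smul_right]
        simp [norm_smul, hu]; ring
    _ ≤ c * ‖x‖ ^ 2 := by gcongr; exact h u hu

theorem mono (hT : NumRadLE T a) (hab : a ≤ b) : NumRadLE T b := fun x =>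
  (hT x).trans (by gcongr)

theorem add (hS : NumRadLE S a) (hT : NumRadLE T b) : NumRadLE (S + T) (a + b) := fun x =>
  calc ‖⟪x, (S + T) x⟫‖ ≤ ‖⟪x, S x⟫‖ + ‖⟪x, T x⟫‖ := by
        rw [add_apply, inner_add_right]; exact norm_add_le _ _
    _ ≤ (a + b) * ‖x‖ ^ 2 := by linarith [hS x, hT x]

theorem smul (hT : NumRadLE T c) (z : ℂ) : NumRadLE (z • T) (‖z‖ * c) := fun x => by
  rw [smul_apply, inner_smul_right, norm_mul, mul_assoc]
  gcongr
  exact hT x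

theorem one : NumRadLE (1 : H →L[ℂ] H) 1 := fun x => by
  simp [inner_self_eq_norm_sq_to_K]

variable [CompleteSpace H]

theorem norm_add_adjoint_le (hT : NumRadLE T c) (hc : 0 ≤ c) : ‖T + adjoint T‖ ≤ 2 * c := by
  have hsymm : (T + adjoint T).IsSymmetric := by
    rw [← star_eq_adjoint]; exact (IsSelfAdjoint.add_star_self T).isSymmetric
  rw [(T + adjoint T).norm_eq_iSup_rayleighQuotient hsymm]
  refine ciSup_le fun x => ?_
  rw [rayleighQuotient, reApplyInnerSelf_apply, abs_div, abs_sq]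
  have hre : RCLike.re ⟪(T + adjoint T) x, x⟫ = 2 * (⟪x, T x⟫).re := by
    rw [add_apply, inner_add_left, adjoint_inner_left, map_add, inner_re_symm]
    simp only [RCLike.re_to_complex]; ring
  refine div_le_of_le_mul₀ (by positivity) (by positivity) ?_
  rw [hre, abs_mul, abs_two, mul_assoc]
  gcongr
  exact (Complex.abs_re_le_norm _).trans (hT x)

theorem re_inner_apply_apply_le (hT : NumRadLE T c) (hc : 0 ≤ c) (x : H) :
    (⟪x, T (T x)⟫).re ≤ c ^ 2 * ‖x‖ ^ 2 := by
  have hnorm : ‖T x + adjoint T x‖ ≤ 2 * c * ‖x‖ := by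
    simpa using (T + adjoint T).le_of_opNorm_le (hT.norm_add_adjoint_le hc) x
  have hpolar : 4 * (⟪x, T (T x)⟫).re = ‖T x + adjoint T x‖ ^ 2 - ‖T x - adjoint T x‖ ^ 2 := by
    rw [← adjoint_inner_left, @norm_add_sq ℂ, @norm_sub_sq ℂ, ← inner_re_symm,
      RCLike.re_to_complex]
    ring
  nlinarith [sq_nonneg ‖T x - adjoint T x‖, norm_nonneg (T x + adjoint T x)]

theorem mul_self (hT : NumRadLE T c) (hc : 0 ≤ c) : NumRadLE (T * T) (c ^ 2) := fun x => by
  rw [mul_apply_eq_comp]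
  set w := ⟪x, T (T x)⟫
  rcases eq_or_ne w 0 with hw | hw
  · rw [hw, norm_zero]; positivity
  -- `ω • T` has the same numerical radius and `⟪x, (ω • T)² x⟫ = ‖w‖`.
  obtain ⟨ω, hω⟩ := IsAlgClosed.exists_pow_nat_eq ((‖w‖ : ℂ) / w) two_pos
  have hω1 : ‖ω‖ = 1 := by
    have : ‖ω‖ ^ 2 = 1 := by rw [← norm_pow, hω, norm_div]; simp [hw]
    nlinarith [norm_nonneg ω]
  have := (hT.smul ω).re_inner_apply_apply_le (by positivity) x
  rw [smul_apply, smul_apply, map_smul, inner_smul_right, inner_smul_right, ← mul_assoc,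
    ← sq, hω, div_mul_cancel₀ _ hw, hω1, one_mul] at this
  simpa using this

end NumRadLE

end NumericalRadius

theorem rk4_eq_sum_powers_one_add {R : Type*} [Ring R] [Algebra ℂ R] (a : R) :
    1 + a + (1 / 2 : ℂ) • a ^ 2 + (1 / 6 : ℂ) • a ^ 3 + (1 / 24 : ℂ) • a ^ 4
      = (3 / 8 : ℂ) • 1 + (1 / 3 : ℂ) • (1 + a) + (1 / 4 : ℂ) • (1 + a) ^ 2
        + (1 / 24 : ℂ) • (1 + a) ^ 4 := by
  have h2 : (1 + a) ^ 2 = 1 + 2 • a + a ^ 2 := by noncomm_ring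
  have h4 : (1 + a) ^ 4 = 1 + 4 • a + 6 • a ^ 2 + 4 • a ^ 3 + a ^ 4 := by noncomm_ring
  rw [h2, h4]
  module

section Matrix

variable {N : ℕ} {A : Matrix (Fin N) (Fin N) ℂ} {c : ℝ}

theorem numRadLE_toEuclideanCLM_of_numRad_le (h : numRad A ≤ c) :
    NumRadLE (Matrix.toEuclideanCLM (𝕜 := ℂ) A) c := by
  set M := Matrix.toEuclideanCLM (𝕜 := ℂ) A
  refine NumRadLE.of_norm_eq_one fun x hx => h.trans' (le_csSup ⟨‖M‖, ?_⟩ ⟨x, hx, rfl⟩)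
  rintro _ ⟨y, hy, rfl⟩
  calc ‖⟪y, M y⟫‖ ≤ ‖y‖ * ‖M y‖ := norm_inner_le_norm _ _
    _ ≤ ‖M‖ := by simpa [hy] using M.le_opNorm y

theorem numRad_le_of_numRadLE (h : NumRadLE (Matrix.toEuclideanCLM (𝕜 := ℂ) A) c) (hc : 0 ≤ c) :
    numRad A ≤ c := by
  refine Real.sSup_le ?_ hc
  rintro _ ⟨x, hx, rfl⟩
  simpa [hx] using h x

end Matrix

theorem stmt_14 {N : ℕ} (A : Matrix (Fin N) (Fin N) ℂ) (h : numRad (1 + A) ≤ 1) :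
    numRad (1 + A + (1 / 2 : ℂ) • A ^ 2 + (1 / 6 : ℂ) • A ^ 3 + (1 / 24 : ℂ) • A ^ 4) ≤ 1 := by
  set T := Matrix.toEuclideanCLM (𝕜 := ℂ) (1 + A)
  have hT : NumRadLE T 1 := numRadLE_toEuclideanCLM_of_numRad_le h
  have hT2 : NumRadLE (T ^ 2) 1 := by simpa [sq] using hT.mul_self zero_le_one
  have hT4 : NumRadLE (T ^ 4) 1 := by
    simpa [← pow_add] using hT2.mul_self zero_le_one
  refine numRad_le_of_numRadLE ?_ zero_le_one
  rw [rk4_eq_sum_powers_one_add, map_add, map_add, map_add, map_smul, map_smul, map_smul,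
    map_smul, map_one, map_pow, map_pow]
  refine ((((NumRadLE.one.smul _).add (hT.smul _)).add (hT2.smul _)).add (hT4.smul _)).mono ?_
  norm_num
end
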